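/- Let k, ℓ, m, n be positive integers with ℓ > k ≥ 2, n > ℓ + 1, m > k + 1, and F^(k)_m = F^(ℓ)_n. Assume moreover that n < 2^{ℓ/2}. Let α = α(k) be the dominant root for k. Then |2^{n−2} − g(α, k)·α^{m−1}| < 5·2^{n−2}/2^{ℓ/2}, and consequently |1 − g(α, k)·α^{m−1}·2^{−(n−2)}| < 5/2^{ℓ/2}. -/

import Mathlib

/-- `gfib k i` is the `k`-generalized Fibonacci number `F^(k)_n` with the shifted index
`i = n + k - 2`: it is `0` for `i < k - 1` (i.e. `n ≤ 0`), `1` for `i = k - 1`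
(i.e. `F^(k)_1 = 1`), and for `i ≥ k` (i.e. `n ≥ 2`) it is the sum of the `k`
preceding terms. -/
def gfib (k : ℕ) (i : ℕ) : ℕ :=
  if _h1 : i < k - 1 then 0
  else if _h2 : i = k - 1 then 1
  else ∑ j ∈ Finset.range k, gfib k (i - 1 - j)
termination_by i
decreasing_by
  simp_wf
  omega

/-- `genFib k n = F^(k)_n`, the `n`-th `k`-generalized Fibonacci number (for `n ≥ 0`). -/
def genFib (k : ℕ) (n : ℕ) : ℕ := gfib k (n + k - 2)

/-- `g x y = (x - 1)/(2 + (y + 1)(x - 2))`. -/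
noncomputable def g (x y : ℝ) : ℝ := (x - 1) / (2 + (y + 1) * (x - 2))

/-!
On the `l` side, `F^(l)_n = 2 ^ (n - 2)` up to `n = l + 1`, and from then on the recurrence
`F (i + 1) = 2 F i - F (i - l)` subtracts at most `2 ^ (n - l - 2)` per step; since
`n < 2 ^ (l / 2)`, the accumulated loss `(n - l - 1) 2 ^ (n - l - 2)` is below
`2 ^ (n - 2) / 2 ^ (l / 2)`.

On the `k` side, the defects `F (j + 1) - α F j` stay in `[-1, 1]`: `α ^ k` times a defect is an
`α ^ t`-weighted sum of the `k` previous ones, and the weights sum to `α ^ k`. The coefficients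
`y i = α ^ i - ∑ j < i, α ^ j` express `α ^ M` as `∑ i < k, y i F (N - i)` with
`N = M + k - 1`; replacing each `F (N - i)` by `α ^ (-i) F N` costs a bounded error, and
`∑ i < k, y i α ^ (-i)` is exactly `1 / g(α, k)`. This gives
`|F^(k)_m - g(α, k) α ^ (m - 1)| ≤ 4 (k - 1) < 4 n`.
-/

open Finset

section GFib

variable {k i t : ℕ}

lemma gfib_of_lt_pred (h : i < k - 1) : gfib k i = 0 := by
  rw [gfib]; simp [h]

lemma gfib_pred_self : gfib k (k - 1) = 1 := by
  rw [gfib]; simp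

lemma gfib_eq_sum (h : k ≤ i) (hk : 1 ≤ k) :
    gfib k i = ∑ j ∈ range k, gfib k (i - 1 - j) := by
  rw [gfib, dif_neg (by omega), dif_neg (by omega)]

lemma gfib_self (hk : 1 ≤ k) : gfib k k = 1 := by
  rw [gfib_eq_sum le_rfl hk, sum_eq_single 0, Nat.sub_zero, gfib_pred_self]
  · intro j hj _
    exact gfib_of_lt_pred (by rw [mem_range] at hj; omega)
  · intro h
    exact absurd (mem_range.mpr (by omega)) h

lemma gfib_succ_add_gfib_sub (h : k ≤ i) (hk : 1 ≤ k) :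
    gfib k (i + 1) + gfib k (i - k) = 2 * gfib k i := by
  obtain ⟨K, rfl⟩ : ∃ K, k = K + 1 := ⟨k - 1, by omega⟩
  have hi := gfib_eq_sum h hk
  have hi1 := gfib_eq_sum (i := i + 1) (by omega) hk
  rw [sum_range_succ] at hi
  rw [sum_range_succ'] at hi1
  have hshift : ∑ j ∈ range K, gfib (K + 1) (i + 1 - 1 - (j + 1)) =
      ∑ j ∈ range K, gfib (K + 1) (i - 1 - j) :=
    sum_congr rfl fun j _ => congrArg _ (by omega)
  rw [hshift, show i + 1 - 1 - 0 = i by omega] at hi1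
  rw [show i - 1 - K = i - (K + 1) by omega] at hi
  omega

lemma gfib_add_of_lt (ht : t < k) : gfib k (k + t) = 2 ^ t := by
  induction t with
  | zero => exact gfib_self (by omega)
  | succ t ih =>
    have h := gfib_succ_add_gfib_sub (k := k) (i := k + t) (by omega) (by omega)
    rw [show k + t - k = t by omega, gfib_of_lt_pred (i := t) (by omega), ih (by omega)] at h
    rw [← add_assoc, pow_succ]
    omega

lemma gfib_add_le (hk : 1 ≤ k) : gfib k (k + t) ≤ 2 ^ t := by
  induction t with
  | zero => simp [gfib_self hk]
  | succ t ih =>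
    have h := gfib_succ_add_gfib_sub (k := k) (i := k + t) (by omega) hk
    rw [← add_assoc, pow_succ]
    omega

lemma two_pow_le_gfib_add (hk : 1 ≤ k) :
    2 ^ (k + t) ≤ gfib k (2 * k + t) + (t + 1) * 2 ^ t := by
  induction t with
  | zero =>
    have h := gfib_succ_add_gfib_sub (k := k) (i := k + (k - 1)) (by omega) hk
    rw [gfib_add_of_lt (by omega), show k + (k - 1) - k = k - 1 by omega, gfib_pred_self,
      show k + (k - 1) + 1 = 2 * k + 0 by omega] at h
    rw [show k + 0 = k - 1 + 1 by omega, pow_succ]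
    omega
  | succ t ih =>
    have h := gfib_succ_add_gfib_sub (k := k) (i := 2 * k + t) (by omega) hk
    have hle := gfib_add_le (k := k) (t := t) hk
    rw [show 2 * k + t - k = k + t by omega] at h
    rw [← add_assoc, ← add_assoc, pow_succ, pow_succ]
    nlinarith

end GFib

lemma sub_pow_mul_eq_sum {R : Type*} [CommRing R] (f : ℕ → R) (a : R) (j i : ℕ) :
    f (j + i) - a ^ i * f j =
      ∑ t ∈ range i, a ^ t * (f (j + i - t) - a * f (j + i - 1 - t)) := by
  induction i with
  | zero => simp
  | succ i ih =>
    have hshift : ∑ t ∈ range i, a ^ (t + 1) * (f (j + (i + 1) - (t + 1)) -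
        a * f (j + (i + 1) - 1 - (t + 1))) =
        a * ∑ t ∈ range i, a ^ t * (f (j + i - t) - a * f (j + i - 1 - t)) := by
      rw [mul_sum]
      refine sum_congr rfl fun t _ => ?_
      rw [show j + (i + 1) - (t + 1) = j + i - t by omega,
        show j + (i + 1) - 1 - (t + 1) = j + i - 1 - t by omega]
      ring
    rw [sum_range_succ', hshift, ← ih, show j + (i + 1) - 1 - 0 = j + i by omega]
    simp only [pow_zero, one_mul, Nat.sub_zero, ← add_assoc]
    ring

section DominantRoot

variable {k : ℕ} {α : ℝ}

lemma ne_zero_of_pow_eq_geom_sum (hroot : α ^ k = ∑ j ∈ range k, α ^ j) : k ≠ 0 := by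
  rintro rfl
  simp at hroot

lemma pow_mul_two_sub_eq_one (hroot : α ^ k = ∑ j ∈ range k, α ^ j) :
    α ^ k * (2 - α) = 1 := by
  have h := geom_sum_mul α k
  rw [← hroot] at h
  linear_combination -h

lemma three_halves_le_of_pow_eq_geom_sum (hk : 2 ≤ k) (hα1 : 1 < α) (hα2 : α < 2)
    (hroot : α ^ k = ∑ j ∈ range k, α ^ j) : 3 / 2 ≤ α := by
  have h1 := pow_mul_two_sub_eq_one hroot
  have h2 : α ^ 2 ≤ α ^ k := pow_le_pow_right₀ hα1.le hk
  have h3 : 0 ≤ (α - 1) * (α ^ 2 - α - 1) := by nlinarith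
  -- so `α` is at least the golden ratio
  have h4 : 0 ≤ α ^ 2 - α - 1 := (mul_nonneg_iff_of_pos_left (by linarith)).mp h3
  nlinarith

lemma sub_one_le_two_add_mul_of_pow_eq_geom_sum (hα1 : 1 < α) (hα2 : α < 2)
    (hroot : α ^ k = ∑ j ∈ range k, α ^ j) : α - 1 ≤ 2 + (k + 1) * (α - 2) := by
  have h1 := pow_mul_two_sub_eq_one hroot
  have hbern : 1 + k * (α - 1) ≤ α ^ k := by
    simpa using one_add_mul_le_pow (a := α - 1) (by linarith) k
  -- Bernoulli and `α ^ k = 1 / (2 - α)` give `k * (2 - α) ≤ 1`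
  have hk2 : (k : ℝ) * (2 - α) ≤ 1 := by nlinarith
  nlinarith

lemma abs_gfib_succ_sub_mul_le_one (hk : 2 ≤ k) (hα1 : 1 < α) (hα2 : α < 2)
    (hroot : α ^ k = ∑ j ∈ range k, α ^ j) (j : ℕ) :
    |(gfib k (j + 1) : ℝ) - α * gfib k j| ≤ 1 := by
  induction j using Nat.strong_induction_on with
  | _ j ih =>
  rcases lt_or_ge j k with hj | hj
  · rcases (by omega : j + 2 < k ∨ j + 2 = k ∨ j + 1 = k) with h | h | h
    · simp [gfib_of_lt_pred (k := k) (i := j + 1) (by omega),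
        gfib_of_lt_pred (k := k) (i := j) (by omega)]
    · simp [show j + 1 = k - 1 by omega, gfib_pred_self,
        gfib_of_lt_pred (k := k) (i := j) (by omega)]
    · rw [h, gfib_self (by omega), show j = k - 1 by omega, gfib_pred_self, abs_le]
      constructor <;> push_cast <;> linarith
  · have hrec : (gfib k (j + 1) : ℝ) + gfib k (j - k) = 2 * gfib k j := by
      exact_mod_cast gfib_succ_add_gfib_sub hj (by omega)
    have htel := sub_pow_mul_eq_sum (fun i => (gfib k i : ℝ)) α (j - k) k
    rw [Nat.sub_add_cancel hj] at htel
    have hkey : α ^ k * ((gfib k (j + 1) : ℝ) - α * gfib k j) =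
        ∑ t ∈ range k, α ^ t * ((gfib k (j - t) : ℝ) - α * gfib k (j - 1 - t)) := by
      rw [← htel]
      linear_combination α ^ k * hrec + (gfib k j : ℝ) * pow_mul_two_sub_eq_one hroot
    have hsum : |∑ t ∈ range k, α ^ t * ((gfib k (j - t) : ℝ) - α * gfib k (j - 1 - t))| ≤
        α ^ k := by
      rw [hroot]
      refine (abs_sum_le_sum_abs _ _).trans (sum_le_sum fun t ht => ?_)
      rw [mem_range] at ht
      have hprev := ih (j - 1 - t) (by omega)
      rw [show j - 1 - t + 1 = j - t by omega] at hprev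
      rw [abs_mul, abs_of_pos (by positivity)]
      exact mul_le_of_le_one_right (by positivity) hprev
    have hpos : 0 < α ^ k := by positivity
    rw [← hkey, abs_mul, abs_of_pos hpos] at hsum
    exact le_of_mul_le_mul_left (by linarith) hpos

lemma sub_one_mul_abs_gfib_add_sub_pow_mul_le (hk : 2 ≤ k) (hα1 : 1 < α) (hα2 : α < 2)
    (hroot : α ^ k = ∑ j ∈ range k, α ^ j) (j i : ℕ) :
    (α - 1) * |(gfib k (j + i) : ℝ) - α ^ i * gfib k j| ≤ α ^ i - 1 := by
  rw [← geom_sum_mul, mul_comm _ (α - 1)]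
  refine mul_le_mul_of_nonneg_left ?_ (by linarith)
  rw [sub_pow_mul_eq_sum (fun i => (gfib k i : ℝ))]
  refine (abs_sum_le_sum_abs _ _).trans (sum_le_sum fun t ht => ?_)
  rw [mem_range] at ht
  have hdef := abs_gfib_succ_sub_mul_le_one hk hα1 hα2 hroot (j + i - 1 - t)
  rw [show j + i - 1 - t + 1 = j + i - t by omega] at hdef
  rw [abs_mul, abs_of_pos (by positivity)]
  exact mul_le_of_le_one_right (by positivity) hdef

lemma sum_inv_pow_eq_self (hα : α ≠ 0) (hroot : α ^ k = ∑ j ∈ range k, α ^ j) :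
    ∑ i ∈ range k, α⁻¹ ^ i = α := by
  obtain ⟨K, rfl⟩ := Nat.exists_eq_add_one_of_ne_zero (ne_zero_of_pow_eq_geom_sum hroot)
  rw [← sum_range_reflect, Nat.add_sub_cancel] at hroot
  refine mul_right_cancel₀ (pow_ne_zero K hα) ?_
  rw [sum_mul, ← pow_succ', hroot]
  refine sum_congr rfl fun i hi => ?_
  rw [pow_sub₀ α hα (by simp only [mem_range] at hi; omega), inv_pow, mul_comm]

def powCoeff (α : ℝ) (i : ℕ) : ℝ := α ^ i - ∑ j ∈ range i, α ^ j

lemma powCoeff_zero : powCoeff α 0 = 1 := by simp [powCoeff]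

lemma powCoeff_succ (i : ℕ) : powCoeff α (i + 1) = α * powCoeff α i - 1 := by
  simp only [powCoeff, geom_sum_succ, pow_succ]
  ring

lemma sub_one_mul_powCoeff (i : ℕ) : (α - 1) * powCoeff α i = 1 - (2 - α) * α ^ i := by
  have h := geom_sum_mul α i
  simp only [powCoeff]
  linear_combination -h

lemma mul_powCoeff_pred (hroot : α ^ k = ∑ j ∈ range k, α ^ j) :
    α * powCoeff α (k - 1) = 1 := by
  obtain ⟨K, rfl⟩ := Nat.exists_eq_add_one_of_ne_zero (ne_zero_of_pow_eq_geom_sum hroot)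
  have h := powCoeff_succ (α := α) K
  rw [powCoeff, ← hroot, sub_self] at h
  rw [Nat.add_sub_cancel]
  linarith

lemma powCoeff_nonneg (hα1 : 1 < α) (hα2 : α < 2) (hroot : α ^ k = ∑ j ∈ range k, α ^ j)
    {i : ℕ} (hi : i ≤ k) : 0 ≤ powCoeff α i := by
  have h := sub_one_mul_powCoeff (α := α) i
  have hle : α ^ i ≤ α ^ k := pow_le_pow_right₀ hα1.le hi
  have h1 := pow_mul_two_sub_eq_one hroot
  refine (mul_nonneg_iff_of_pos_left (sub_pos.mpr hα1)).mp ?_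
  nlinarith

lemma sub_one_mul_sum_powCoeff (hroot : α ^ k = ∑ j ∈ range k, α ^ j) :
    (α - 1) * ∑ i ∈ range k, powCoeff α i = k - 1 := by
  rw [mul_sum, sum_congr rfl fun i _ => sub_one_mul_powCoeff i, sum_sub_distrib, ← mul_sum,
    ← hroot, mul_comm, pow_mul_two_sub_eq_one hroot]
  simp

lemma sub_one_mul_sum_powCoeff_mul_inv_pow (hα : α ≠ 0)
    (hroot : α ^ k = ∑ j ∈ range k, α ^ j) :
    (α - 1) * ∑ i ∈ range k, powCoeff α i * α⁻¹ ^ i = 2 + (k + 1) * (α - 2) := by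
  have hterm (i : ℕ) : (α - 1) * (powCoeff α i * α⁻¹ ^ i) = α⁻¹ ^ i - (2 - α) := by
    rw [← mul_assoc, sub_one_mul_powCoeff, sub_mul, mul_assoc, ← mul_pow,
      mul_inv_cancel₀ hα, one_pow]
    ring
  rw [mul_sum, sum_congr rfl fun i _ => hterm i, sum_sub_distrib, sum_inv_pow_eq_self hα hroot,
    sum_const, card_range, nsmul_eq_mul]
  ring

lemma sum_powCoeff_mul_gfib (hroot : α ^ k = ∑ j ∈ range k, α ^ j) (M : ℕ) :
    ∑ i ∈ range k, powCoeff α i * gfib k (M + k - 1 - i) = α ^ M := by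
  obtain ⟨K, rfl⟩ := Nat.exists_eq_add_one_of_ne_zero (ne_zero_of_pow_eq_geom_sum hroot)
  induction M with
  | zero =>
    rw [sum_eq_single 0 (fun i hi hi0 => ?_) (by simp)]
    · simpa [powCoeff_zero] using gfib_pred_self (k := K + 1)
    · rw [gfib_of_lt_pred (by simp only [mem_range] at hi; omega)]
      simp
  | succ M ih =>
    have hrec : (gfib (K + 1) (M + K + 1) : ℝ) =
        ∑ j ∈ range (K + 1), (gfib (K + 1) (M + K - j) : ℝ) := by
      rw [gfib_eq_sum (by omega) (by omega), Nat.add_sub_cancel, Nat.cast_sum]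
    have hpred := mul_powCoeff_pred hroot
    have hidx : ∀ i, M + 1 + (K + 1) - 1 - (i + 1) = M + K - i := fun i => by omega
    simp only [show M + (K + 1) - 1 = M + K by omega] at ih
    rw [sum_range_succ] at hrec ih
    rw [Nat.add_sub_cancel] at hpred
    rw [sum_range_succ', show M + 1 + (K + 1) - 1 - 0 = M + K + 1 by omega]
    simp only [hidx, powCoeff_succ, powCoeff_zero, sub_mul, sum_sub_distrib, mul_assoc, ← mul_sum,
      one_mul, Nat.add_sub_cancel_right] at hrec ih ⊢
    linear_combination α * ih + hrec - (gfib (K + 1) M : ℝ) * hpred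

lemma sub_one_mul_abs_sum_mul_gfib_sub_pow_le (hk : 2 ≤ k) (hα1 : 1 < α) (hα2 : α < 2)
    (hroot : α ^ k = ∑ j ∈ range k, α ^ j) (M : ℕ) :
    (α - 1) * |(∑ i ∈ range k, powCoeff α i * α⁻¹ ^ i) * gfib k (M + k - 1) - α ^ M| ≤
      ∑ i ∈ range k, powCoeff α i := by
  set N := M + k - 1
  have hinv (i : ℕ) : α⁻¹ ^ i * α ^ i = 1 := by
    rw [← mul_pow, inv_mul_cancel₀ (by positivity), one_pow]
  have hX : (∑ i ∈ range k, powCoeff α i * α⁻¹ ^ i) * gfib k N - α ^ M =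
      ∑ i ∈ range k, powCoeff α i * α⁻¹ ^ i * (gfib k N - α ^ i * gfib k (N - i)) := by
    rw [← sum_powCoeff_mul_gfib hroot M, sum_mul, ← sum_sub_distrib]
    refine sum_congr rfl fun i _ => ?_
    linear_combination (powCoeff α i * gfib k (N - i)) * hinv i
  rw [hX]
  refine (mul_le_mul_of_nonneg_left (abs_sum_le_sum_abs _ _) (by linarith)).trans ?_
  rw [mul_sum]
  refine sum_le_sum fun i hi => ?_
  rw [mem_range] at hi
  have hD := sub_one_mul_abs_gfib_add_sub_pow_mul_le hk hα1 hα2 hroot (N - i) i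
  rw [Nat.sub_add_cancel (by omega)] at hD
  have hp := powCoeff_nonneg hα1 hα2 hroot hi.le
  rw [abs_mul, abs_mul, abs_of_nonneg hp, abs_of_pos (by positivity)]
  set D := |(gfib k N : ℝ) - α ^ i * gfib k (N - i)|
  calc (α - 1) * (powCoeff α i * α⁻¹ ^ i * D)
      = powCoeff α i * α⁻¹ ^ i * ((α - 1) * D) := by ring
    _ ≤ powCoeff α i * α⁻¹ ^ i * α ^ i := by gcongr; linarith
    _ = powCoeff α i := by rw [mul_assoc, hinv, mul_one]

lemma abs_gfib_sub_g_mul_pow_le (hk : 2 ≤ k) (hα1 : 1 < α) (hα2 : α < 2)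
    (hroot : α ^ k = ∑ j ∈ range k, α ^ j) (M : ℕ) :
    |(gfib k (M + k - 1) : ℝ) - g α k * α ^ M| ≤ 4 * (k - 1) := by
  set N := M + k - 1
  have hα32 := three_halves_le_of_pow_eq_geom_sum hk hα1 hα2 hroot
  have hW := sub_one_le_two_add_mul_of_pow_eq_geom_sum hα1 hα2 hroot
  set W : ℝ := 2 + (k + 1) * (α - 2)
  set S := ∑ i ∈ range k, powCoeff α i * α⁻¹ ^ i
  have hS : (α - 1) * S = W := sub_one_mul_sum_powCoeff_mul_inv_pow (by positivity) hroot
  have hWpos : 0 < W := by linarith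
  have hgW : g α k * W = α - 1 := div_mul_cancel₀ _ hWpos.ne'
  have hWE : W * ((gfib k N : ℝ) - g α k * α ^ M) = (α - 1) * (S * gfib k N - α ^ M) := by
    linear_combination -(gfib k N : ℝ) * hS - α ^ M * hgW
  set E := |(gfib k N : ℝ) - g α k * α ^ M|
  have hE : W * E = (α - 1) * |S * gfib k N - α ^ M| := by
    rw [← abs_of_pos hWpos, ← abs_mul, hWE, abs_mul, abs_of_pos (by linarith : 0 < α - 1)]
  have hE0 : 0 ≤ E := abs_nonneg _
  have hquarter : 1 / 4 ≤ (α - 1) * (α - 1) := by nlinarith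
  calc E ≤ 4 * ((α - 1) * ((α - 1) * E)) := by
        nlinarith [mul_le_mul_of_nonneg_right hquarter hE0]
    _ ≤ 4 * ((α - 1) * (W * E)) := by gcongr
    _ ≤ 4 * (k - 1) := by
        rw [hE, ← sub_one_mul_sum_powCoeff hroot]
        gcongr
        exact sub_one_mul_abs_sum_mul_gfib_sub_pow_le hk hα1 hα2 hroot M

end DominantRoot

lemma abs_two_pow_sub_genFib_le {l n : ℕ} (hl : 1 ≤ l) (hn : l + 2 ≤ n) :
    |(2 : ℝ) ^ (n - 2) - genFib l n| ≤ (n - l - 1 : ℕ) * (2 : ℝ) ^ (n - l - 2) := by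
  have hup : genFib l n ≤ 2 ^ (n - 2) := by
    have h := gfib_add_le (k := l) (t := n - 2) hl
    rwa [show l + (n - 2) = n + l - 2 by omega] at h
  have hlow : 2 ^ (n - 2) ≤ genFib l n + (n - l - 1) * 2 ^ (n - l - 2) := by
    have h := two_pow_le_gfib_add (k := l) (t := n - l - 2) hl
    rwa [show 2 * l + (n - l - 2) = n + l - 2 by omega, show l + (n - l - 2) = n - 2 by omega,
      show n - l - 2 + 1 = n - l - 1 by omega] at h
  have hup' : (genFib l n : ℝ) ≤ 2 ^ (n - 2) := by exact_mod_cast hup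
  have hlow' : (2 : ℝ) ^ (n - 2) ≤ genFib l n + (n - l - 1 : ℕ) * 2 ^ (n - l - 2) := by
    exact_mod_cast hlow
  have hnonneg : (0 : ℝ) ≤ (n - l - 1 : ℕ) * 2 ^ (n - l - 2) := by positivity
  rw [abs_le]
  constructor <;> linarith

lemma mul_two_pow_sub_lt_div_rpow {x : ℝ} {l N : ℕ} (hx : x < 2 ^ ((l : ℝ) / 2))
    (hlN : l ≤ N) :
    x * 2 ^ (N - l) < 2 ^ N / 2 ^ ((l : ℝ) / 2) := by
  set B : ℝ := 2 ^ ((l : ℝ) / 2)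
  have hB : 0 < B := by positivity
  have hN : (2 : ℝ) ^ N = 2 ^ (N - l) * (B * B) := by
    rw [← Real.rpow_add two_pos, add_halves, Real.rpow_natCast, ← pow_add,
      Nat.sub_add_cancel hlN]
  rw [lt_div_iff₀ hB, hN]
  calc x * 2 ^ (N - l) * B = x * (2 ^ (N - l) * B) := by ring
    _ < B * (2 ^ (N - l) * B) := mul_lt_mul_of_pos_right hx (by positivity)
    _ = 2 ^ (N - l) * (B * B) := by ring

lemma abs_one_sub_mul_inv_lt {x y c : ℝ} (hx : 0 < x) (h : |x - y| < c * x) :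
    |1 - y * x⁻¹| < c := by
  rwa [show 1 - y * x⁻¹ = (x - y) / x by field_simp, abs_div, abs_of_pos hx, div_lt_iff₀ hx]

theorem close_to_power_of_two (k l m n : ℕ) (hk : 2 ≤ k) (hkl : k < l)
    (hn : l + 1 < n) (hm : k + 1 < m) (heq : genFib k m = genFib l n)
    (hsmall : (n : ℝ) < (2 : ℝ) ^ ((l : ℝ) / 2))
    (α : ℝ) (hα1 : 1 < α) (hα2 : α < 2)
    (hαroot : α ^ k = ∑ j ∈ Finset.range k, α ^ j) :
    |(2 : ℝ) ^ (n - 2) - g α k * α ^ (m - 1)| <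
      5 * (2 : ℝ) ^ (n - 2) / (2 : ℝ) ^ ((l : ℝ) / 2) ∧
    |1 - g α k * α ^ (m - 1) * (2 : ℝ) ^ (-((n : ℤ) - 2))| <
      5 / (2 : ℝ) ^ ((l : ℝ) / 2) := by
  set T : ℝ := 2 ^ (n - 2 - l)
  have hT : 1 ≤ T := one_le_pow₀ one_le_two
  have hsmallT := mul_two_pow_sub_lt_div_rpow hsmall (N := n - 2) (by omega)
  have hlside : |(2 : ℝ) ^ (n - 2) - genFib l n| ≤ n * T := by
    refine (abs_two_pow_sub_genFib_le (by omega) (by omega)).trans ?_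
    rw [show n - l - 2 = n - 2 - l by omega]
    gcongr
    exact_mod_cast (by omega : n - l - 1 ≤ n)
  have hkside : |(genFib l n : ℝ) - g α k * α ^ (m - 1)| ≤ 4 * (n * T) := by
    have h := abs_gfib_sub_g_mul_pow_le hk hα1 hα2 hαroot (m - 1)
    rw [show m - 1 + k - 1 = m + k - 2 by omega] at h
    rw [← heq]
    refine h.trans ?_
    have hkn : (k : ℝ) ≤ n := by exact_mod_cast (by omega : k ≤ n)
    nlinarith
  have hmain : |(2 : ℝ) ^ (n - 2) - g α k * α ^ (m - 1)| <
      5 * (2 : ℝ) ^ (n - 2) / (2 : ℝ) ^ ((l : ℝ) / 2) := by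
    calc _ ≤ _ := abs_sub_le _ (genFib l n : ℝ) _
      _ ≤ 5 * (n * T) := by linarith
      _ < _ := by rw [mul_div_assoc]; gcongr
  refine ⟨hmain, ?_⟩
  rw [show -((n : ℤ) - 2) = -((n - 2 : ℕ) : ℤ) by omega, zpow_neg, zpow_natCast]
  exact abs_one_sub_mul_inv_lt (by positivity) (by rwa [div_mul_eq_mul_div])
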